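/- Every element x ∈ 𝔰𝔭_{2n}(k) is Sp_{2n}(k)-conjugate to an element of the Borel subalgebra 𝔟: there exists g ∈ Sp_{2n}(k) with g·x·g⁻¹ of block form [[a,b],[0,ᵀa]] with a upper triangular and ᵀb = b. Equivalently, ⋃_{g ∈ Sp_{2n}(k)} g·𝔟·g⁻¹ = 𝔰𝔭_{2n}(k). -/

import Mathlib

/-!
In characteristic 2 the form `B u v = uᵀ J v` is alternating, and `xᵀ J = J x` says that `x` is
`B`-self-adjoint. Over an algebraically closed field `x` has an eigenvector `e₀`; complete it to a
hyperbolic pair `(e₀, f₀)`. The compression of `x` to the orthogonal complement of `{e₀, f₀}` is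
again self-adjoint, and since `B e₀ (x u) = B (x e₀) u = 0` there, `x` differs from its compression
only by multiples of `e₀`. Induction therefore gives a symplectic basis `(e, f)` with
`x (e j) ∈ span {e i | i ≤ j}`. In this basis the matrix of `x` has zero lower-left block and
upper-triangular upper-left block, and self-adjointness forces the remaining blocks into the shape
`[[a, b], [0, aᵀ]]` with `bᵀ = b`.
-/

open Matrix Module

/-- The Gram matrix `J = [[0, 1ₙ], [1ₙ, 0]]` of the symplectic form. -/
def Jsp (k : Type*) [Field k] (n : ℕ) : Matrix (Fin n ⊕ Fin n) (Fin n ⊕ Fin n) k :=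
  Matrix.fromBlocks 0 1 1 0

section HyperbolicPair

variable {k W : Type*} [Field k] [AddCommGroup W] [Module k W]
  {B : LinearMap.BilinForm k W} {e f : W}

structure IsSymplecticFamily {ι : Type*} [DecidableEq ι] (B : LinearMap.BilinForm k W)
    (e f : ι → W) : Prop where
  isotropic_left : ∀ i j, B (e i) (e j) = 0
  isotropic_right : ∀ i j, B (f i) (f j) = 0
  apply_left_right : ∀ i j, B (e i) (f j) = if i = j then 1 else 0

lemma LinearMap.SeparatingLeft.exists_apply_eq_one (hB : B.SeparatingLeft) (he : e ≠ 0) :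
    ∃ f, B e f = 1 := by
  obtain ⟨w, hw⟩ : ∃ w, B e w ≠ 0 := by
    by_contra! h
    exact he (hB e h)
  exact ⟨(B e w)⁻¹ • w, by rw [map_smul, smul_eq_mul, inv_mul_cancel₀ hw]⟩

def orthogonalPair (B : LinearMap.BilinForm k W) (e f : W) : Submodule k W :=
  LinearMap.ker ((B e).prod (B f))

lemma mem_orthogonalPair {w : W} : w ∈ orthogonalPair B e f ↔ B e w = 0 ∧ B f w = 0 := by
  simp [orthogonalPair]

variable (hB : B.IsAlt) (hef : B e f = 1)

include hB hef in
lemma apply_swap_eq_neg_one : B f e = -1 := by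
  rw [← hB.neg_eq, hef]

include hB hef in
lemma finrank_orthogonalPair_add_two [FiniteDimensional k W] :
    finrank k (orthogonalPair B e f) + 2 = finrank k W := by
  have hsurj : Function.Surjective ((B e).prod (B f)) := fun p =>
    ⟨p.1 • f - p.2 • e, by simp [hB e, hB f, hef, apply_swap_eq_neg_one hB hef]⟩
  rw [← LinearMap.finrank_range_add_finrank_ker ((B e).prod (B f)),
    LinearMap.range_eq_top.2 hsurj, finrank_top, finrank_prod, finrank_self, add_comm]
  rfl

/-- The projection onto `orthogonalPair B e f` along `span {e, f}`. -/
def orthogonalPairProj : W →ₗ[k] orthogonalPair B e f :=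
  (LinearMap.id + (B f).smulRight e - (B e).smulRight f).codRestrict _ fun v => by
    simp [mem_orthogonalPair, hB e, hB f, hef, apply_swap_eq_neg_one hB hef]

lemma coe_orthogonalPairProj (v : W) :
    (orthogonalPairProj hB hef v : W) = v + B f v • e - B e v • f :=
  rfl

lemma apply_orthogonalPairProj_left {u : W} (hu : u ∈ orthogonalPair B e f) (v : W) :
    B (orthogonalPairProj hB hef v) u = B v u := by
  obtain ⟨heu, hfu⟩ := mem_orthogonalPair.1 hu
  simp [coe_orthogonalPairProj, heu, hfu]

lemma apply_orthogonalPairProj_right {u : W} (hu : u ∈ orthogonalPair B e f) (v : W) :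
    B u (orthogonalPairProj hB hef v) = B u v := by
  obtain ⟨heu, hfu⟩ := mem_orthogonalPair.1 hu
  simp [coe_orthogonalPairProj, hB.eq_iff.1 heu, hB.eq_iff.1 hfu]

include hB hef in
lemma separatingLeft_restrict_orthogonalPair (hsep : B.SeparatingLeft) :
    (B.restrict (orthogonalPair B e f)).SeparatingLeft := fun u hu =>
  Subtype.ext <| hsep u fun w => by
    rw [← apply_orthogonalPairProj_right hB hef u.2]
    exact hu (orthogonalPairProj hB hef w)

def compressPair (x : Module.End k W) : Module.End k (orthogonalPair B e f) :=
  orthogonalPairProj hB hef ∘ₗ x ∘ₗ (orthogonalPair B e f).subtype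

lemma isAdjointPair_compressPair {x : Module.End k W} (hx : LinearMap.IsAdjointPair B B x x) :
    LinearMap.IsAdjointPair (B.restrict _) (B.restrict _)
      (compressPair hB hef x) (compressPair hB hef x) := fun u v => by
  change B (orthogonalPairProj hB hef (x u)) v = B u (orthogonalPairProj hB hef (x v))
  rw [apply_orthogonalPairProj_left hB hef v.2, apply_orthogonalPairProj_right hB hef u.2, hx]

lemma apply_eq_compressPair_sub {x : Module.End k W} {u : orthogonalPair B e f}
    (hxu : B e (x u) = 0) : x u = compressPair hB hef x u - B f (x u) • e := by
  simp [compressPair, coe_orthogonalPairProj, hxu]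

include hB hef in
lemma IsSymplecticFamily.cons {m : ℕ} {e' f' : Fin m → orthogonalPair B e f}
    (h : IsSymplecticFamily (B.restrict _) e' f') :
    IsSymplecticFamily B (Fin.cons e fun i => e' i) (Fin.cons f fun i => f' i) := by
  have hee : ∀ i j, B (e' i) (e' j) = 0 := h.isotropic_left
  have hff : ∀ i j, B (f' i) (f' j) = 0 := h.isotropic_right
  have hef' : ∀ i j, B (e' i) (f' j) = if i = j then 1 else 0 := h.apply_left_right
  have hmem := fun u : orthogonalPair B e f => mem_orthogonalPair.1 u.2
  have hmem' := fun u : orthogonalPair B e f =>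
    (mem_orthogonalPair.1 u.2).imp hB.eq_iff.1 hB.eq_iff.1
  constructor <;> intro i j <;> cases i using Fin.cases <;> cases j using Fin.cases <;>
    simp [hB e, hB f, hef, hmem, hmem', hee, hff, hef', @eq_comm (Fin (m + 1)) 0]

end HyperbolicPair

theorem exists_isSymplecticFamily_triangular {k : Type*} [Field k] [IsAlgClosed k] (m : ℕ)
    {W : Type*} [AddCommGroup W] [Module k W] [FiniteDimensional k W]
    (hdim : finrank k W = 2 * m) {B : LinearMap.BilinForm k W} (hB : B.IsAlt)
    (hsep : B.SeparatingLeft) {x : Module.End k W} (hx : LinearMap.IsAdjointPair B B x x) :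
    ∃ e f : Fin m → W, IsSymplecticFamily B e f ∧
      ∀ j, ∃ c : Fin m → k, (∀ i, j < i → c i = 0) ∧ x (e j) = ∑ i, c i • e i := by
  induction m generalizing W with
  | zero => exact ⟨finZeroElim, finZeroElim, ⟨finZeroElim, finZeroElim, finZeroElim⟩, finZeroElim⟩
  | succ m ih =>
    have : Nontrivial W := Module.finrank_pos_iff.1 (by rw [hdim]; omega)
    obtain ⟨μ, hμ⟩ := x.exists_eigenvalue
    obtain ⟨e₀, he₀⟩ := hμ.exists_hasEigenvector
    obtain ⟨f₀, hef⟩ := hsep.exists_apply_eq_one he₀.2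
    have hxe₀ : x e₀ = μ • e₀ := he₀.apply_eq_smul
    obtain ⟨e, f, hsymp, htri⟩ := ih (W := orthogonalPair B e₀ f₀)
      (by have := finrank_orthogonalPair_add_two hB hef; omega)
      (fun u => hB u) (separatingLeft_restrict_orthogonalPair hB hef hsep)
      (isAdjointPair_compressPair hB hef hx)
    refine ⟨_, _, hsymp.cons hB hef, fun j => ?_⟩
    cases j using Fin.cases with
    | zero =>
      refine ⟨Pi.single 0 μ, fun i hi => Pi.single_eq_of_ne hi.ne' _, ?_⟩
      simp [hxe₀]
    | succ j =>
      obtain ⟨c, hc, hxe⟩ := htri j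
      have hxe₀' : B e₀ (x (e j)) = 0 := by
        rw [← hx, hxe₀, LinearMap.map_smul₂, (mem_orthogonalPair.1 (e j).2).1, smul_zero]
      refine ⟨Fin.cons (-B f₀ (x (e j))) c, fun i hi => ?_, ?_⟩
      · cases i using Fin.cases with
        | zero => exact absurd hi (Fin.not_lt_zero _)
        | succ i => exact hc i (Fin.succ_lt_succ_iff.1 hi)
      · simp only [Fin.cons_succ, Fin.sum_univ_succ, Fin.cons_zero]
        conv_lhs => rw [apply_eq_compressPair_sub hB hef hxe₀', hxe]
        simp [sub_eq_neg_add]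

section MatrixLemmas

variable {R ι : Type*} [CommRing R] [Fintype ι] [DecidableEq ι]

lemma Matrix.isUnit_of_transpose_mul_mul_eq {J P : Matrix ι ι R} (hJ : IsUnit J.det)
    (h : Pᵀ * J * P = J) : IsUnit P := by
  have hdet : P.det * P.det * J.det = 1 * J.det := by
    have := congrArg det h
    rw [det_mul, det_mul, det_transpose] at this
    linear_combination this
  exact (isUnit_iff_isUnit_det P).2 (.of_mul_eq_one _ (hJ.mul_right_cancel hdet))

lemma Matrix.transpose_nonsing_inv_mul_mul_nonsing_inv {J P : Matrix ι ι R} (hP : IsUnit P)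
    (h : Pᵀ * J * P = J) : (P⁻¹)ᵀ * J * P⁻¹ = J := by
  have hP' : IsUnit P.det := (isUnit_iff_isUnit_det P).1 hP
  have hPt : IsUnit Pᵀ.det := by rwa [det_transpose]
  conv_lhs => rw [← h]
  rw [transpose_nonsing_inv, ← Matrix.mul_assoc, ← Matrix.mul_assoc, nonsing_inv_mul _ hPt,
    Matrix.one_mul, Matrix.mul_assoc, mul_nonsing_inv _ hP', Matrix.mul_one]

lemma Matrix.of_mul_mul_transpose_of_apply (J : Matrix ι ι R) {κ : Type*} (v : κ → ι → R)
    (s t : κ) : (of v * J * (of v)ᵀ) s t = toBilin' J (v s) (v t) := by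
  rw [toBilin'_apply', Matrix.mul_apply', dotProduct_mulVec]
  rfl

lemma Matrix.nonsing_inv_mul_mul_apply {P x : Matrix ι ι R} (hP : IsUnit P) {t : ι} {c : ι → R}
    (h : x *ᵥ P.col t = ∑ s, c s • P.col s) (s : ι) : (P⁻¹ * x * P) s t = c s := by
  have hP' : IsUnit P.det := (isUnit_iff_isUnit_det P).1 hP
  have hc : P *ᵥ c = ∑ s, c s • P.col s := by
    rw [← transpose_transpose P, mulVec_transpose, vecMul_eq_sum]; rfl
  change (P⁻¹ * x * P).col t s = c s
  rw [← mulVec_single_one, ← mulVec_mulVec, mulVec_single_one, ← mulVec_mulVec,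
    h, ← hc, mulVec_mulVec, nonsing_inv_mul _ hP', one_mulVec]

end MatrixLemmas

section Jsp

variable {k : Type*} [Field k] {n : ℕ}

lemma Jsp_mul_Jsp : Jsp k n * Jsp k n = 1 := by
  simp [Jsp, fromBlocks_multiply, fromBlocks_one]

lemma det_Jsp_ne_zero : (Jsp k n).det ≠ 0 := fun h => by
  simpa [h] using congrArg det (Jsp_mul_Jsp (k := k) (n := n))

lemma isAlt_toBilin'_Jsp [CharP k 2] : (toBilin' (Jsp k n)).IsAlt := fun u => by
  simp [toBilin'_apply', Jsp, fromBlocks_mulVec, dotProduct, Fintype.sum_sum_type, mul_comm,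
    CharTwo.add_self_eq_zero]

lemma fromBlocks_transpose_mul_Jsp_eq_iff {a b c d : Matrix (Fin n) (Fin n) k} :
    (fromBlocks a b c d)ᵀ * Jsp k n = Jsp k n * fromBlocks a b c d ↔
      cᵀ = c ∧ d = aᵀ ∧ bᵀ = b := by
  simp only [Jsp, fromBlocks_transpose, fromBlocks_multiply, zero_mul, one_mul, mul_zero, mul_one,
    zero_add, add_zero, fromBlocks_inj]
  constructor
  · rintro ⟨hc, had, -, hb⟩
    exact ⟨hc, had.symm, hb⟩
  · rintro ⟨hc, rfl, hb⟩
    exact ⟨hc, rfl, transpose_transpose a, hb⟩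

lemma separatingLeft_toBilin'_Jsp : (toBilin' (Jsp k n)).SeparatingLeft :=
  (LinearMap.BilinForm.nondegenerate_toBilin'_of_det_ne_zero' _ det_Jsp_ne_zero).1

lemma IsSymplecticFamily.of_mul_Jsp_mul_transpose_of [CharP k 2] {e f : Fin n → Fin n ⊕ Fin n → k}
    (h : IsSymplecticFamily (toBilin' (Jsp k n)) e f) :
    of (Sum.elim e f) * Jsp k n * (of (Sum.elim e f))ᵀ = Jsp k n := by
  have hfe : ∀ i j, toBilin' (Jsp k n) (f i) (e j) = if i = j then 1 else 0 := fun i j => by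
    rw [← isAlt_toBilin'_Jsp.neg_eq, h.apply_left_right, CharTwo.neg_eq]
    exact if_congr eq_comm rfl rfl
  ext (i | i) (j | j) <;>
    simp only [of_mul_mul_transpose_of_apply, Sum.elim_inl, Sum.elim_inr, h.isotropic_left,
      h.isotropic_right, h.apply_left_right, hfe] <;>
    simp [Jsp, one_apply]

end Jsp

theorem exists_symplectic_conj_eq_fromBlocks {k : Type*} [Field k] [IsAlgClosed k] [CharP k 2]
    {n : ℕ} {x : Matrix (Fin n ⊕ Fin n) (Fin n ⊕ Fin n) k} (hx : xᵀ * Jsp k n = Jsp k n * x) :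
    ∃ (g : Matrix (Fin n ⊕ Fin n) (Fin n ⊕ Fin n) k) (a b : Matrix (Fin n) (Fin n) k),
      IsUnit g ∧ gᵀ * Jsp k n * g = Jsp k n ∧ (∀ i j : Fin n, j < i → a i j = 0) ∧ bᵀ = b ∧
      g * x * g⁻¹ = fromBlocks a b 0 aᵀ := by
  obtain ⟨e, f, hsymp, htri⟩ := exists_isSymplecticFamily_triangular n (by simp [two_mul])
    isAlt_toBilin'_Jsp separatingLeft_toBilin'_Jsp
    (x := toLin' x) ((isAdjointPair_toLinearMap₂' _ _ _ _).2 hx)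
  choose c hc hxe using htri
  set P := (of (Sum.elim e f))ᵀ
  have hPJP : Pᵀ * Jsp k n * P = Jsp k n := by
    rw [transpose_transpose]; exact hsymp.of_mul_Jsp_mul_transpose_of
  have hP : IsUnit P := isUnit_of_transpose_mul_mul_eq (isUnit_iff_ne_zero.2 det_Jsp_ne_zero) hPJP
  have hPdet : IsUnit P.det := (isUnit_iff_isUnit_det P).1 hP
  set y := P⁻¹ * x * P
  have hPyP : P * y * P⁻¹ = x := by
    simp only [y, ← Matrix.mul_assoc, mul_nonsing_inv _ hPdet, Matrix.one_mul,
      mul_nonsing_inv_cancel_right _ _ hPdet]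
  have hy : yᵀ * Jsp k n = Jsp k n * y := by
    have := (isAdjointPair_equiv (Jsp k n) y y P hP).2 (by rw [hPyP]; exact hx)
    rwa [hPJP] at this
  have hPcol : ∀ t, P.col t = Sum.elim e f t := fun t => rfl
  have hcol : ∀ j s, y s (Sum.inl j) = Sum.elim (c j) 0 s := fun j =>
    nonsing_inv_mul_mul_apply hP (by simpa [hPcol, Fintype.sum_sum_type] using hxe j)
  obtain ⟨-, hd, hb⟩ := fromBlocks_transpose_mul_Jsp_eq_iff.1 (fromBlocks_toBlocks y ▸ hy)
  refine ⟨P⁻¹, y.toBlocks₁₁, y.toBlocks₁₂, isUnit_nonsing_inv_iff.2 hP,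
    transpose_nonsing_inv_mul_mul_nonsing_inv hP hPJP, fun i j hij => ?_, hb, ?_⟩
  · simpa [toBlocks₁₁, hcol] using hc j i hij
  · rw [nonsing_inv_nonsing_inv _ hPdet]
    change y = _
    conv_lhs => rw [← fromBlocks_toBlocks y, hd]
    congr
    ext i j
    simp [toBlocks₂₁, hcol]

theorem stmt_13_general (k : Type) [Field k] [IsAlgClosed k] [CharP k 2] (n : ℕ) :
    (∀ x : Matrix (Fin n ⊕ Fin n) (Fin n ⊕ Fin n) k, xᵀ * Jsp k n = Jsp k n * x →
      ∃ (g : Matrix (Fin n ⊕ Fin n) (Fin n ⊕ Fin n) k) (a b : Matrix (Fin n) (Fin n) k),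
        IsUnit g ∧ gᵀ * Jsp k n * g = Jsp k n ∧
        (∀ i j : Fin n, (j : ℕ) < (i : ℕ) → a i j = 0) ∧ bᵀ = b ∧
        g * x * g⁻¹ = Matrix.fromBlocks a b 0 aᵀ) ∧
    {x : Matrix (Fin n ⊕ Fin n) (Fin n ⊕ Fin n) k |
      ∃ (g : Matrix (Fin n ⊕ Fin n) (Fin n ⊕ Fin n) k) (a b : Matrix (Fin n) (Fin n) k),
        IsUnit g ∧ gᵀ * Jsp k n * g = Jsp k n ∧
        (∀ i j : Fin n, (j : ℕ) < (i : ℕ) → a i j = 0) ∧ bᵀ = b ∧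
        x = g * Matrix.fromBlocks a b 0 aᵀ * g⁻¹}
      = {x : Matrix (Fin n ⊕ Fin n) (Fin n ⊕ Fin n) k | xᵀ * Jsp k n = Jsp k n * x} := by
  refine ⟨fun x hx => exists_symplectic_conj_eq_fromBlocks hx, Set.ext fun x => ⟨?_, fun hx => ?_⟩⟩
  · rintro ⟨g, a, b, hg, hgJ, -, hb, rfl⟩
    have hborel := (fromBlocks_transpose_mul_Jsp_eq_iff (a := a)).2 ⟨transpose_zero, rfl, hb⟩
    exact (isAdjointPair_equiv _ _ _ g hg).1 (hgJ.symm ▸ hborel)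
  · obtain ⟨g, a, b, hg, hgJ, ha, hb, hconj⟩ := exists_symplectic_conj_eq_fromBlocks hx
    have hgdet : IsUnit g.det := (isUnit_iff_isUnit_det g).1 hg
    refine ⟨g⁻¹, a, b, isUnit_nonsing_inv_iff.2 hg,
      transpose_nonsing_inv_mul_mul_nonsing_inv hg hgJ, ha, hb, ?_⟩
    rw [← hconj, nonsing_inv_nonsing_inv _ hgdet, Matrix.mul_assoc,
      nonsing_inv_mul_cancel_right _ _ hgdet, nonsing_inv_mul_cancel_left _ _ hgdet]

/-- Every element of `𝔰𝔭_{2n}(k)` is `Sp_{2n}(k)`-conjugate to an element of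
the Borel subalgebra `𝔟 = {[[a,b],[0,aᵀ]] : a upper triangular, bᵀ = b}`; equivalently
`⋃_{g ∈ Sp_{2n}(k)} g·𝔟·g⁻¹ = 𝔰𝔭_{2n}(k)`. -/
theorem stmt_13 (k : Type) [Field k] [IsAlgClosed k] [CharP k 2] (n : ℕ) (hn : 1 ≤ n) :
    (∀ x : Matrix (Fin n ⊕ Fin n) (Fin n ⊕ Fin n) k, xᵀ * Jsp k n = Jsp k n * x →
      ∃ (g : Matrix (Fin n ⊕ Fin n) (Fin n ⊕ Fin n) k) (a b : Matrix (Fin n) (Fin n) k),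
        IsUnit g ∧ gᵀ * Jsp k n * g = Jsp k n ∧
        (∀ i j : Fin n, (j : ℕ) < (i : ℕ) → a i j = 0) ∧ bᵀ = b ∧
        g * x * g⁻¹ = Matrix.fromBlocks a b 0 aᵀ) ∧
    {x : Matrix (Fin n ⊕ Fin n) (Fin n ⊕ Fin n) k |
      ∃ (g : Matrix (Fin n ⊕ Fin n) (Fin n ⊕ Fin n) k) (a b : Matrix (Fin n) (Fin n) k),
        IsUnit g ∧ gᵀ * Jsp k n * g = Jsp k n ∧
        (∀ i j : Fin n, (j : ℕ) < (i : ℕ) → a i j = 0) ∧ bᵀ = b ∧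
        x = g * Matrix.fromBlocks a b 0 aᵀ * g⁻¹}
      = {x : Matrix (Fin n ⊕ Fin n) (Fin n ⊕ Fin n) k | xᵀ * Jsp k n = Jsp k n * x} :=
  stmt_13_general k n
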